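/- arXiv:math/9812168 — 6 statements merged into one kernel-verified Lean document; each statement's English description precedes it below -/
import Mathlib

section
/- Let G be a finite group with a normal subgroup V such that V is an elementary abelian 2-group, the quotient W = G/V is an elementary abelian 2-group, and V is of maximal rank in G. If every element of order 2 in G is central, then rank(G/V) ≤ 2·rank(V). -/
/-- A subgroup is an elementary abelian 2-group: every element squares to the
identity (such a subgroup is automatically abelian). -/
def IsElemAbelian2 {G : Type*} [Group G] (A : Subgroup G) : Prop :=
  (∀ a ∈ A, a * a = 1) ∧ ∀ a ∈ A, ∀ b ∈ A, a * b = b * a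

/-- A subgroup `V` of `G` has maximal rank if every elementary abelian
2-subgroup `A` of `G` satisfies `|A| ≤ |V|`. -/
def IsMaximalRank2 {G : Type*} [Group G] (V : Subgroup G) : Prop :=
  ∀ A : Subgroup G, IsElemAbelian2 A → Nat.card A ≤ Nat.card V

/-! Every involution of `G` is central, so `V` is central and squaring descends to a map
`q : W → V`, `q (g V) = g ^ 2`, and `(g h) ^ 2 = g ^ 2 h ^ 2 ⁅h, g⁆`. Hence `q` is a quadratic map
of `𝔽₂`-vector spaces whose polar form is the commutator pairing. In coordinates it consists of
`rank V` quadratic polynomials in `rank W` variables, so if `rank W > 2 rank V` then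
Chevalley–Warning gives a nontrivial common zero: some `g ∉ V` with `g ^ 2 = 1`. Such a `g` is a
central involution, and the central involutions form an elementary abelian subgroup strictly
larger than `V`, contradicting maximality of the rank of `V`. -/

open Module Subgroup
open scoped commutatorElement IsMulCommutative

theorem QuadraticMap.exists_mvPolynomial_eval_eq {R σ : Type*} [CommRing R] [Fintype σ]
    (Q : QuadraticForm R (σ → R)) :
    ∃ P : MvPolynomial σ R, P.totalDegree ≤ 2 ∧ ∀ x, MvPolynomial.eval x P = Q x := by
  classical
  obtain ⟨B, rfl⟩ := LinearMap.BilinMap.toQuadraticMap_surjective Q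
  refine ⟨∑ i, ∑ j, MvPolynomial.C (B (Pi.single i 1) (Pi.single j 1)) *
      (MvPolynomial.X i * MvPolynomial.X j), ?_, fun x => ?_⟩
  · refine MvPolynomial.totalDegree_finsetSum_le fun i _ =>
      MvPolynomial.totalDegree_finsetSum_le fun j _ => ?_
    refine (MvPolynomial.totalDegree_mul _ _).trans ?_
    refine (add_le_add le_rfl (MvPolynomial.totalDegree_mul _ _)).trans ?_
    rcases subsingleton_or_nontrivial R with hR | hR
    · simp [Subsingleton.elim _ (0 : MvPolynomial σ R)]
    · simp [MvPolynomial.totalDegree_C, MvPolynomial.totalDegree_X]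
  · conv_rhs => rw [LinearMap.BilinMap.toQuadraticMap_apply, ← Matrix.toBilin'_toMatrix' B,
      Matrix.toBilin'_apply]
    simp only [map_sum, map_mul, MvPolynomial.eval_C, MvPolynomial.eval_X,
      LinearMap.BilinForm.toMatrix'_apply]
    exact Finset.sum_congr rfl fun i _ => Finset.sum_congr rfl fun j _ => by ring

theorem QuadraticMap.exists_ne_zero_forall_eq_zero {K σ ι : Type*} [Field K] [Fintype K]
    [Fintype σ] [Fintype ι] (Q : ι → QuadraticForm K (σ → K))
    (h : 2 * Fintype.card ι < Fintype.card σ) : ∃ x ≠ 0, ∀ i, Q i x = 0 := by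
  classical
  choose P hdeg heval using fun i => (Q i).exists_mvPolynomial_eval_eq
  obtain ⟨p, hp⟩ := CharP.exists K
  have hsum : ∑ i, (P i).totalDegree < Fintype.card σ :=
    calc ∑ i, (P i).totalDegree ≤ ∑ _i : ι, 2 := Finset.sum_le_sum fun i _ => hdeg i
      _ < Fintype.card σ := by simpa [mul_comm] using h
  have hdvd := char_dvd_card_solutions_of_fintype_sum_lt p hsum
  have hzero : ∀ i, MvPolynomial.eval 0 (P i) = 0 := fun i => by rw [heval, QuadraticMap.map_zero]
  have htwo : 1 < Fintype.card { x : σ → K // ∀ i, MvPolynomial.eval x (P i) = 0 } :=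
    (CharP.char_is_prime K p).one_lt.trans_le
      (Nat.le_of_dvd (Fintype.card_pos_iff.mpr ⟨⟨0, hzero⟩⟩) hdvd)
  obtain ⟨⟨x, hx⟩, hx0⟩ := Fintype.exists_ne_of_one_lt_card htwo ⟨0, hzero⟩
  exact ⟨x, fun h => hx0 (Subtype.ext h), fun i => heval i x ▸ hx i⟩

theorem QuadraticMap.exists_ne_zero_map_eq_zero {K M N : Type*} [Field K] [Fintype K]
    [AddCommGroup M] [Module K M] [FiniteDimensional K M]
    [AddCommGroup N] [Module K N] [FiniteDimensional K N]
    (Q : QuadraticMap K M N) (h : 2 * finrank K N < finrank K M) : ∃ x ≠ 0, Q x = 0 := by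
  let bM := finBasis K M
  let bN := finBasis K N
  obtain ⟨x, hx0, hx⟩ := QuadraticMap.exists_ne_zero_forall_eq_zero
    (fun j => (bN.coord j).compQuadraticMap (Q.comp bM.equivFun.symm.toLinearMap))
    (by simpa using h)
  refine ⟨bM.equivFun.symm x, (LinearEquiv.map_ne_zero_iff _).mpr hx0,
    bN.forall_coord_eq_zero_iff.mp fun j => ?_⟩
  simpa using hx j

section CentralCommutators
variable {G : Type*} [Group G]

theorem commutatorElement_mul_right_of_mem_center {a b c : G} (h : ⁅a, c⁆ ∈ center G) :
    ⁅a, b * c⁆ = ⁅a, b⁆ * ⁅a, c⁆ := by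
  rw [commutatorElement_mul_right_eq_mul_conj, mul_assoc _ b, mem_center_iff.mp h b]
  group

theorem mul_pow_two_of_commutatorElement_mem_center {a b : G} (h : ⁅b, a⁆ ∈ center G) :
    (a * b) ^ 2 = a ^ 2 * b ^ 2 * ⁅b, a⁆ := by
  have hba : b * a = ⁅b, a⁆ * (a * b) := by rw [commutatorElement_def]; group
  generalize ⁅b, a⁆ = z at h hba
  calc (a * b) ^ 2 = a * (b * a) * b := by rw [sq]; simp only [mul_assoc]
    _ = a ^ 2 * b ^ 2 * z := by
      rw [hba]
      simp only [sq, mul_assoc, ← mem_center_iff.mp h]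

end CentralCommutators

theorem pow_two_eq_one_of_zmod_two {H : Type*} [CommGroup H] [Module (ZMod 2) (Additive H)]
    (h : H) : h ^ 2 = 1 := by
  simpa [← ofMul_pow] using ZModModule.char_nsmul_eq_zero 2 (Additive.ofMul h)

namespace MonoidHom

variable {G W : Type*} [Group G] [CommGroup W] {V : Subgroup G} (π : G →* W)

theorem commutatorElement_mem_of_ker_le (hker : π.ker ≤ V) (g h : G) : ⁅g, h⁆ ∈ V :=
  hker <| by rw [mem_ker, map_commutatorElement, commutatorElement_eq_one_iff_mul_comm, mul_comm]

variable [Module (ZMod 2) (Additive W)]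

theorem pow_two_mem_of_ker_le (hker : π.ker ≤ V) (g : G) : g ^ 2 ∈ V :=
  hker <| by rw [mem_ker, map_pow, pow_two_eq_one_of_zmod_two]

/-- `π g ↦ g ^ 2`; the choice of preimage does not matter once `V` is central of exponent two
(`coe_sqLift_apply`). -/
noncomputable def sqLift (hπ : Function.Surjective π) (hker : π.ker ≤ V) (w : W) : V :=
  ⟨Function.surjInv hπ w ^ 2, π.pow_two_mem_of_ker_le hker _⟩

variable [IsMulCommutative V] [Module (ZMod 2) (Additive V)]

theorem coe_sqLift_apply (hπ : Function.Surjective π) (hker : π.ker ≤ V) (hVZ : V ≤ center G)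
    (g : G) : (π.sqLift hπ hker (π g) : G) = g ^ 2 := by
  set h := Function.surjInv hπ (π g)
  have hv : h⁻¹ * g ∈ V := hker <| by
    rw [mem_ker, map_mul, map_inv, Function.surjInv_eq hπ, inv_mul_cancel]
  have hsq : (h⁻¹ * g) ^ 2 = 1 := congrArg Subtype.val (pow_two_eq_one_of_zmod_two ⟨_, hv⟩)
  calc (h : G) ^ 2 = h ^ 2 * (h⁻¹ * g) ^ 2 := by rw [hsq, mul_one]
    _ = g ^ 2 := by
      rw [← Commute.mul_pow (mem_center_iff.mp (hVZ hv) h), mul_inv_cancel_left]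

theorem sqLift_mul (hπ : Function.Surjective π) (hker : π.ker ≤ V) (hVZ : V ≤ center G)
    (g h : G) :
    π.sqLift hπ hker (π g * π h) = π.sqLift hπ hker (π g) * π.sqLift hπ hker (π h) *
      ⟨⁅h, g⁆, π.commutatorElement_mem_of_ker_le hker h g⟩ := by
  apply Subtype.ext
  simp only [← map_mul, coe_mul, coe_sqLift_apply π hπ hker hVZ]
  exact mul_pow_two_of_commutatorElement_mem_center
    (hVZ (π.commutatorElement_mem_of_ker_le hker h g))

theorem polar_sqLift (hπ : Function.Surjective π) (hker : π.ker ≤ V) (hVZ : V ≤ center G)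
    (g h : G) :
    QuadraticMap.polar (fun x : Additive W => Additive.ofMul (π.sqLift hπ hker x.toMul))
      (.ofMul (π g)) (.ofMul (π h)) =
      Additive.ofMul (⟨⁅h, g⁆, π.commutatorElement_mem_of_ker_le hker h g⟩ : V) := by
  rw [QuadraticMap.polar, ← ofMul_mul, toMul_ofMul, toMul_ofMul, toMul_ofMul,
    sqLift_mul π hπ hker hVZ, ofMul_mul, ofMul_mul]
  abel

theorem sqLift_one (hπ : Function.Surjective π) (hker : π.ker ≤ V) (hVZ : V ≤ center G) :
    π.sqLift hπ hker 1 = 1 :=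
  Subtype.ext <| by simpa using π.coe_sqLift_apply hπ hker hVZ 1

noncomputable def sqQuadraticMap (hπ : Function.Surjective π) (hker : π.ker ≤ V)
    (hVZ : V ≤ center G) : QuadraticMap (ZMod 2) (Additive W) (Additive V) :=
  have hsurj : Function.Surjective fun g => Additive.ofMul (π g) :=
    Additive.ofMul.surjective.comp hπ
  have hzero : Additive.ofMul (π.sqLift hπ hker (Additive.toMul 0)) = 0 := by
    rw [toMul_zero, sqLift_one π hπ hker hVZ, ofMul_one]
  .ofPolar (fun x => .ofMul (π.sqLift hπ hker x.toMul))
    (fun a x => by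
      obtain rfl | rfl : a = 0 ∨ a = 1 := by revert a; decide
      · rw [zero_smul, mul_zero, zero_smul, hzero]
      · rw [one_smul, mul_one, one_smul])
    (fun x x' y => by
      obtain ⟨g, rfl⟩ := hsurj x
      obtain ⟨g', rfl⟩ := hsurj x'
      obtain ⟨h, rfl⟩ := hsurj y
      simp only [← ofMul_mul, ← map_mul, polar_sqLift π hπ hker hVZ]
      exact congrArg Additive.ofMul <| Subtype.ext <| commutatorElement_mul_right_of_mem_center
        (hVZ (π.commutatorElement_mem_of_ker_le hker h g')))
    (fun a x y => by
      obtain rfl | rfl : a = 0 ∨ a = 1 := by revert a; decide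
      · rw [zero_smul, zero_smul, QuadraticMap.polar, hzero, zero_add, sub_zero, sub_self]
      · rw [one_smul, one_smul])

theorem exists_pow_two_eq_one_of_two_mul_finrank_lt [Finite W] [Finite V]
    (hπ : Function.Surjective π) (hker : π.ker ≤ V) (hVZ : V ≤ center G)
    (h : 2 * finrank (ZMod 2) (Additive V) < finrank (ZMod 2) (Additive W)) :
    ∃ g : G, π g ≠ 1 ∧ g ^ 2 = 1 := by
  obtain ⟨x, hx0, hx⟩ := (π.sqQuadraticMap hπ hker hVZ).exists_ne_zero_map_eq_zero h
  obtain ⟨g, hg⟩ := hπ x.toMul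
  refine ⟨g, fun h1 => hx0 ?_, ?_⟩
  · rw [← ofMul_toMul x, ← hg, h1, ofMul_one]
  · have hsq : π.sqLift hπ hker (π g) = 1 := by rw [hg]; exact hx
    simpa [π.coe_sqLift_apply hπ hker hVZ] using congrArg Subtype.val hsq

end MonoidHom

theorem Module.finrank_eq_of_natCard_eq_pow {K M : Type*} [Field K] [Finite K] [AddCommGroup M]
    [Module K M] [Finite M] {n : ℕ} (h : Nat.card M = Nat.card K ^ n) : finrank K M = n :=
  Nat.pow_right_injective Finite.one_lt_card (natCard_eq_pow_finrank.symm.trans h)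

def centralInvolutions (G : Type*) [Group G] : Subgroup G where
  carrier := {g | g ^ 2 = 1 ∧ g ∈ center G}
  one_mem' := ⟨one_pow 2, one_mem _⟩
  mul_mem' := fun {a b} ⟨ha, haZ⟩ ⟨hb, hbZ⟩ =>
    ⟨by rw [Commute.mul_pow (mem_center_iff.mp haZ b).symm, ha, hb, one_mul], mul_mem haZ hbZ⟩
  inv_mem' := fun {a} ⟨ha, haZ⟩ => ⟨by rw [inv_pow, ha, inv_one], inv_mem haZ⟩

theorem isElemAbelian2_centralInvolutions (G : Type*) [Group G] :
    IsElemAbelian2 (centralInvolutions G) :=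
  ⟨fun a ha => sq a ▸ ha.1, fun _ ha b _ => (mem_center_iff.mp ha.2 b).symm⟩

theorem IsMaximalRank2.mem_of_mem_center {G : Type*} [Group G] [Finite G] {V : Subgroup G}
    (hmax : IsMaximalRank2 V) (hV : IsElemAbelian2 V) (hVZ : V ≤ center G) {g : G}
    (hg : g ^ 2 = 1) (hgZ : g ∈ center G) : g ∈ V := by
  have hle : V ≤ centralInvolutions G := fun v hv => ⟨by rw [sq]; exact hV.1 v hv, hVZ hv⟩
  rw [Subgroup.eq_of_le_of_card_ge hle (hmax _ (isElemAbelian2_centralInvolutions G))]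
  exact ⟨hg, hgZ⟩

theorem stmt1 (G : Type*) [Group G] [Finite G] (V : Subgroup G) [V.Normal]
    (hV : IsElemAbelian2 V) (hmax : IsMaximalRank2 V)
    (hW : ∀ w : G ⧸ V, w * w = 1)
    (nV nW : ℕ)
    (hnV : Nat.card V = 2 ^ nV)
    (hnW : Nat.card (G ⧸ V) = 2 ^ nW)
    -- every element of order 2 in G is central
    (h2C : ∀ g : G, orderOf g = 2 → g ∈ Subgroup.center G) :
    nW ≤ 2 * nV := by
  have hcen : ∀ g : G, g ^ 2 = 1 → g ∈ center G := fun g hg => by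
    rcases eq_or_ne g 1 with rfl | hg1
    · exact one_mem _
    · exact h2C g (orderOf_eq_prime hg hg1)
  have hVZ : V ≤ center G := fun v hv => hcen v (by rw [sq]; exact hV.1 v hv)
  have : IsMulCommutative V := ⟨⟨fun a b => Subtype.ext (hV.2 a a.2 b b.2)⟩⟩
  let : Module (ZMod 2) (Additive V) := AddCommGroup.zmodModule fun x =>
    Subtype.ext (by rw [two_nsmul]; exact hV.1 _ x.toMul.2)
  let : CommGroup (G ⧸ V) := { (inferInstance : Group (G ⧸ V)) with
    mul_comm := Commute.of_orderOf_dvd_two fun w =>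
      orderOf_dvd_of_pow_eq_one (by rw [sq]; exact hW w) }
  let : Module (ZMod 2) (Additive (G ⧸ V)) := AddCommGroup.zmodModule fun x => by
    rw [two_nsmul]; exact hW x.toMul
  have hrV : finrank (ZMod 2) (Additive V) = nV :=
    finrank_eq_of_natCard_eq_pow (by rw [Nat.card_zmod]; exact hnV)
  have hrW : finrank (ZMod 2) (Additive (G ⧸ V)) = nW :=
    finrank_eq_of_natCard_eq_pow (by rw [Nat.card_zmod]; exact hnW)
  by_contra! hlt
  obtain ⟨g, hg1, hg2⟩ := (QuotientGroup.mk' V).exists_pow_two_eq_one_of_two_mul_finrank_lt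
    (QuotientGroup.mk'_surjective V) (QuotientGroup.ker_mk' V).le hVZ (by omega)
  exact hg1 ((QuotientGroup.eq_one_iff g).mpr (hmax.mem_of_mem_center hV hVZ hg2 (hcen g hg2)))
end

section
/- Let n ≥ 1 and let Q be a subgroup of GL_n(𝔽₂) that is an elementary abelian 2-group (i.e. Q is abelian and every element of Q squares to the identity). Then 4·rank(Q) ≤ n², where rank(Q) = log₂|Q|. -/
set_option maxHeartbeats 2000000 in
set_option synthInstance.maxHeartbeats 400000 in
theorem stmt4 (n : ℕ) (hn : 1 ≤ n)
    (Q : Subgroup (GL (Fin n) (ZMod 2)))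
    (hQ2 : ∀ A ∈ Q, A * A = 1)
    (hQab : ∀ A ∈ Q, ∀ B ∈ Q, A * B = B * A)
    (r : ℕ) (hr : Nat.card Q = 2 ^ r) :
    4 * r ≤ n ^ 2 := by
  classical
  set Sgen : Set (Matrix (Fin n) (Fin n) (ZMod 2)) :=
    (fun A : GL (Fin n) (ZMod 2) => (A : Matrix (Fin n) (Fin n) (ZMod 2))) '' (Q : Set _)
    with hSgen
  have hcomm : ∀ a ∈ Sgen, ∀ b ∈ Sgen, a * b = b * a := by
    rintro a ⟨A, hA, rfl⟩ b ⟨B, hB, rfl⟩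
    rw [← Units.val_mul, ← Units.val_mul, hQab A hA B hB]
  set R := Algebra.adjoin (ZMod 2) Sgen with hRdef
  letI : CommRing R := Algebra.adjoinCommRingOfComm (ZMod 2) hcomm
  have coe_mul_eq : ∀ a b : R,
      ((a * b : R) : Matrix (Fin n) (Fin n) (ZMod 2)) = (a : Matrix (Fin n) (Fin n) (ZMod 2)) * b :=
    fun _ _ => rfl
  have hmemA : ∀ A ∈ Q, (A : Matrix (Fin n) (Fin n) (ZMod 2)) ∈ R :=
    fun A hA => Algebra.subset_adjoin ⟨A, hA, rfl⟩
  have hmemN : ∀ A ∈ Q, ((A : Matrix (Fin n) (Fin n) (ZMod 2)) - 1) ∈ R :=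
    fun A hA => sub_mem (hmemA A hA) (one_mem R)
  have h2 : ∀ X : Matrix (Fin n) (Fin n) (ZMod 2), X + X = 0 := by
    intro X; ext i j
    have : ∀ c : ZMod 2, c + c = 0 := by decide
    simpa using this (X i j)
  have hsq : ∀ A ∈ Q, ((A : Matrix (Fin n) (Fin n) (ZMod 2)) - 1)
      * ((A : Matrix (Fin n) (Fin n) (ZMod 2)) - 1) = 0 := by
    intro A hA
    have hAA : (A : Matrix (Fin n) (Fin n) (ZMod 2)) * (A : Matrix (Fin n) (Fin n) (ZMod 2)) = 1 := by
      rw [← Units.val_mul, hQ2 A hA, Units.val_one]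
    have expand : ((A : Matrix (Fin n) (Fin n) (ZMod 2)) - 1)
        * ((A : Matrix (Fin n) (Fin n) (ZMod 2)) - 1)
        = ((1 : Matrix (Fin n) (Fin n) (ZMod 2)) + 1)
          - ((A : Matrix (Fin n) (Fin n) (ZMod 2)) + (A : Matrix (Fin n) (Fin n) (ZMod 2))) := by
      simp only [sub_mul, mul_sub, mul_one, one_mul, hAA]
      abel
    rw [expand, h2, h2, sub_zero]
  haveI : Finite R := Subtype.finite
  haveI : IsNoetherianRing R := isNoetherian_of_finite R R
  have hnil : ∀ (A) (hA : A ∈ Q),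
      (⟨(A : Matrix (Fin n) (Fin n) (ZMod 2)) - 1, hmemN A hA⟩ : R) ∈ nilradical R := by
    intro A hA
    refine mem_nilradical.mpr ⟨2, ?_⟩
    apply Subtype.ext
    show (((⟨(A : Matrix (Fin n) (Fin n) (ZMod 2)) - 1, hmemN A hA⟩ : R) ^ 2 : R)
        : Matrix (Fin n) (Fin n) (ZMod 2)) = ((0 : R) : Matrix (Fin n) (Fin n) (ZMod 2))
    rw [show (((⟨(A : Matrix (Fin n) (Fin n) (ZMod 2)) - 1, hmemN A hA⟩ : R) ^ 2 : R)
        : Matrix (Fin n) (Fin n) (ZMod 2))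
        = ((A : Matrix (Fin n) (Fin n) (ZMod 2)) - 1)
          * ((A : Matrix (Fin n) (Fin n) (ZMod 2)) - 1) by rw [pow_two]; rfl]
    rw [hsq A hA]; rfl
  obtain ⟨K, hK⟩ : IsNilpotent (nilradical R) := IsNoetherianRing.isNilpotent_nilradical R
  set Wgen : Set (Fin n → ZMod 2) :=
    {u | ∃ A ∈ Q, ∃ v, ((A : Matrix (Fin n) (Fin n) (ZMod 2)) - 1).mulVec v = u} with hWgen
  set W : Submodule (ZMod 2) (Fin n → ZMod 2) := Submodule.span (ZMod 2) Wgen with hW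
  obtain ⟨C, hC⟩ := Submodule.exists_isCompl W
  set g := Module.finrank (ZMod 2) C with hg
  set w := Module.finrank (ZMod 2) W with hw
  have hwg : w + g = n := by
    rw [hw, hg, Submodule.finrank_add_eq_of_isCompl hC]
    simp [Module.finrank_pi]
  have keyD : ∀ x : R, (∀ v ∈ C, (x : Matrix (Fin n) (Fin n) (ZMod 2)).mulVec v = 0) →
      (x : Matrix (Fin n) (Fin n) (ZMod 2)) = 0 := by
    intro x hx
    have main : ∀ (t : ℕ) (y : R), y ∈ (nilradical R) ^ (K - t) →
        ∀ u : Fin n → ZMod 2, ((x * y : R) : Matrix (Fin n) (Fin n) (ZMod 2)).mulVec u = 0 := by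
      intro t
      induction t with
      | zero =>
        intro y hy u
        rw [Nat.sub_zero, hK] at hy
        have hy0 : y = 0 := by simpa using hy
        rw [hy0, mul_zero]
        show ((0 : R) : Matrix (Fin n) (Fin n) (ZMod 2)).mulVec u = 0
        rw [ZeroMemClass.coe_zero, Matrix.zero_mulVec]
      | succ t ih =>
        intro y hy u
        by_cases ht : t < K
        · have hu : u ∈ W ⊔ C := by rw [hC.codisjoint.eq_top]; exact Submodule.mem_top
          obtain ⟨uw, hwmem, uc, hcmem, rfl⟩ := Submodule.mem_sup.mp hu
          rw [Matrix.mulVec_add]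
          have h1 : ((x * y : R) : Matrix (Fin n) (Fin n) (ZMod 2)).mulVec uc = 0 := by
            rw [mul_comm x y, coe_mul_eq, ← Matrix.mulVec_mulVec, hx uc hcmem,
              Matrix.mulVec_zero]
          have hker : W ≤ LinearMap.ker
              (Matrix.mulVecLin ((x * y : R) : Matrix (Fin n) (Fin n) (ZMod 2))) := by
            rw [hW, Submodule.span_le]
            rintro u' ⟨A, hA, v, rfl⟩
            simp only [SetLike.mem_coe, LinearMap.mem_ker, Matrix.mulVecLin_apply]
            have hstep : ((x * y : R) : Matrix (Fin n) (Fin n) (ZMod 2)).mulVec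
                  (((A : Matrix (Fin n) (Fin n) (ZMod 2)) - 1).mulVec v)
                = ((x * (y * ⟨(A : Matrix (Fin n) (Fin n) (ZMod 2)) - 1, hmemN A hA⟩) : R)
                    : Matrix (Fin n) (Fin n) (ZMod 2)).mulVec v := by
              rw [Matrix.mulVec_mulVec]
              congr 1
              rw [coe_mul_eq, coe_mul_eq, coe_mul_eq, mul_assoc]
            rw [hstep]
            apply ih
            have hKt : K - t = (K - (t + 1)) + 1 := by omega
            rw [hKt, pow_succ]
            exact Ideal.mul_mem_mul hy (hnil A hA)
          have h2' : ((x * y : R) : Matrix (Fin n) (Fin n) (ZMod 2)).mulVec uw = 0 := hker hwmem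
          rw [h1, h2', add_zero]
        · have heq : K - (t + 1) = K - t := by omega
          exact ih y (by rwa [heq] at hy) u
    have h1mem : (1 : R) ∈ (nilradical R) ^ (K - K) := by
      rw [Nat.sub_self, pow_zero, Ideal.one_eq_top]
      exact Submodule.mem_top
    have hx0 : ∀ u : Fin n → ZMod 2, (x : Matrix (Fin n) (Fin n) (ZMod 2)).mulVec u = 0 := by
      intro u
      have := main K 1 h1mem u
      rwa [mul_one] at this
    ext i j
    have := congrFun (hx0 (Pi.single j 1)) i
    rw [Matrix.mulVec_single] at this
    simpa using this
  -- the injection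
  let b := Module.finBasis (ZMod 2) C
  have hmemW : ∀ (A : Q) (i : Fin g),
      (((A : GL (Fin n) (ZMod 2)) : Matrix (Fin n) (Fin n) (ZMod 2)) - 1).mulVec (b i) ∈ W :=
    fun A i => Submodule.subset_span ⟨(A : GL (Fin n) (ZMod 2)), A.2, ((b i : C) : Fin n → ZMod 2), rfl⟩
  let f : Q → (Fin g → W) := fun A i =>
    ⟨(((A : GL (Fin n) (ZMod 2)) : Matrix (Fin n) (Fin n) (ZMod 2)) - 1).mulVec (b i), hmemW A i⟩
  have hf : Function.Injective f := by
    intro A B hAB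
    set AM : Matrix (Fin n) (Fin n) (ZMod 2) := ((A : GL (Fin n) (ZMod 2)) : Matrix (Fin n) (Fin n) (ZMod 2)) with hAM
    set BM : Matrix (Fin n) (Fin n) (ZMod 2) := ((B : GL (Fin n) (ZMod 2)) : Matrix (Fin n) (Fin n) (ZMod 2)) with hBM
    have hxb : ∀ i : Fin g, (AM - BM).mulVec (b i) = 0 := by
      intro i
      have h' : (AM - 1).mulVec (b i) = (BM - 1).mulVec (b i) :=
        congrArg Subtype.val (congrFun hAB i)
      have hd : AM - BM = (AM - 1) - (BM - 1) := by abel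
      rw [hd, Matrix.sub_mulVec, h', sub_self]
    set x : R := ⟨AM - BM, sub_mem (hmemA _ A.2) (hmemA _ B.2)⟩ with hxdef
    have hxC : ∀ v ∈ C, (x : Matrix (Fin n) (Fin n) (ZMod 2)).mulVec v = 0 := by
      intro v hv
      let L : C →ₗ[ZMod 2] (Fin n → ZMod 2) :=
        (Matrix.mulVecLin ((x : R) : Matrix (Fin n) (Fin n) (ZMod 2))).comp C.subtype
      have hL : L = 0 := by
        apply b.ext
        intro i
        show (x : Matrix (Fin n) (Fin n) (ZMod 2)).mulVec (b i) = 0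
        exact hxb i
      have hLv : L ⟨v, hv⟩ = 0 := by rw [hL]; rfl
      simpa [L, Matrix.mulVecLin_apply] using hLv
    have h0 : (x : Matrix (Fin n) (Fin n) (ZMod 2)) = 0 := keyD x hxC
    have hABm : AM = BM := sub_eq_zero.mp h0
    exact Subtype.ext (Units.ext hABm)
  haveI : Fintype W := Fintype.ofFinite _
  have hcard : Nat.card Q ≤ Nat.card (Fin g → W) := Nat.card_le_card_of_injective f hf
  have hWcard : Nat.card W = 2 ^ w := by
    rw [Nat.card_eq_fintype_card, Module.card_eq_pow_finrank (K := ZMod 2), ZMod.card]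
  have htarget : Nat.card (Fin g → W) = 2 ^ (w * g) := by
    rw [Nat.card_pi]
    simp only [Finset.prod_const, Finset.card_univ, Fintype.card_fin]
    rw [hWcard, ← pow_mul]
  have hrw : (2 : ℕ) ^ r ≤ 2 ^ (w * g) := by
    rw [← hr, ← htarget]; exact hcard
  have hrle : r ≤ w * g := (Nat.pow_le_pow_iff_right (by norm_num)).mp hrw
  nlinarith [two_mul_le_add_sq w g, hwg, hrle]
end

section
/- Let m ≡ 1 mod 4 and n ≥ 1. Then there exists a free continuous action of the group (ℤ/2ℤ)^n on the product (ℝP^m)^n. (It is induced coordinatewise by the free action of ℤ/4ℤ on S^m given by multiplication by i in complex coordinates, which descends to a free ℤ/2ℤ-action on ℝP^m.) -/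
noncomputable section

/-- The unit sphere `S^m` in `ℝ^{m+1}`. -/
abbrev Sph (m : ℕ) : Type := Metric.sphere (0 : EuclideanSpace ℝ (Fin (m + 1))) 1

/-- The antipodal relation on the sphere `S^m`. -/
def antipodal (m : ℕ) (x y : Sph m) : Prop :=
  (y : EuclideanSpace ℝ (Fin (m + 1))) = (x : EuclideanSpace ℝ (Fin (m + 1))) ∨
    (y : EuclideanSpace ℝ (Fin (m + 1))) = -(x : EuclideanSpace ℝ (Fin (m + 1)))

/-- Real projective `m`-space: the quotient of `S^m` by the antipodal map,
with the quotient topology. -/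
abbrev RP (m : ℕ) : Type := Quot (antipodal m)

/-!
Pair up the coordinates `(2k, 2k+1)` of `ℝ^{m+1}` (possible since `m` is odd) and let `J` act as
the rotation `(a, b) ↦ (-b, a)` on each pair, i.e. as multiplication by `i` in complex coordinates.
Then `J` is a linear isometry with `J² = -1`, so it preserves the sphere, commutes with the
antipodal map and descends to a continuous involution of `ℝP^m`. This involution has no fixed
point, since `J x = ±x` would give `J² x = x`, i.e. `x = -x`. Letting the `i`-th factor of `(ℤ/2)^n` act by the involution on the
`i`-th factor of `(ℝP^m)^n` gives the free action.
-/

section Coordinatewise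

variable {ι X : Type*}

def coordFlip (σ : X → X) (g : ι → ZMod 2) (x : ι → X) : ι → X :=
  fun i => if g i = 0 then x i else σ (x i)

variable {σ : X → X}

lemma ZMod.two_eq_zero_or_one (a : ZMod 2) : a = 0 ∨ a = 1 := by decide +revert

lemma coordFlip_zero (x : ι → X) : coordFlip σ 0 x = x := by
  funext i
  simp [coordFlip]

lemma coordFlip_add (hσ : Function.Involutive σ) (g h : ι → ZMod 2) (x : ι → X) :
    coordFlip σ (g + h) x = coordFlip σ g (coordFlip σ h x) := by
  funext i
  rcases ZMod.two_eq_zero_or_one (g i) with hg | hg <;>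
    rcases ZMod.two_eq_zero_or_one (h i) with hh | hh <;>
    simp [coordFlip, hg, hh, hσ (x i), (by decide : (1 : ZMod 2) + 1 = 0)]

lemma continuous_coordFlip [TopologicalSpace X] (hσ : Continuous σ) (g : ι → ZMod 2) :
    Continuous (coordFlip σ g) := by
  refine continuous_pi fun i => ?_
  by_cases hg : g i = 0
  · simpa [coordFlip, hg] using continuous_apply i
  · simpa [coordFlip, hg] using hσ.comp' (continuous_apply i)

lemma eq_zero_of_coordFlip_eq (hσ : ∀ p, σ p ≠ p) {g : ι → ZMod 2} {x : ι → X}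
    (hgx : coordFlip σ g x = x) : g = 0 := by
  funext i
  show g i = 0
  by_contra hg
  exact hσ (x i) (by simpa [coordFlip, hg] using congrFun hgx i)

end Coordinatewise

lemma LinearMap.apply_ne_self_of_comp_self_eq_neg {E : Type*} [AddCommGroup E] [Module ℝ E]
    (J : E →ₗ[ℝ] E) (hJ : ∀ x, J (J x) = -x) {x : E} (hx : x ≠ 0) : J x ≠ x ∧ J x ≠ -x := by
  have : IsAddTorsionFree E := .of_isTorsionFree ℝ E
  constructor
  · intro h
    have := hJ x
    rw [h, h] at this
    exact hx (self_eq_neg.mp this)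
  · intro h
    have := hJ x
    rw [h, map_neg, h, neg_neg] at this
    exact hx (self_eq_neg.mp this)

section QuarterTurn

variable {m : ℕ}

def pairSwap (hm : m % 2 = 1) (j : Fin (m + 1)) : Fin (m + 1) :=
  if _ : j.val % 2 = 0 then ⟨j.val + 1, by have := j.isLt; omega⟩
  else ⟨j.val - 1, by have := j.isLt; omega⟩

lemma val_pairSwap (hm : m % 2 = 1) (j : Fin (m + 1)) :
    (pairSwap hm j).val = if j.val % 2 = 0 then j.val + 1 else j.val - 1 := by
  unfold pairSwap
  split_ifs <;> rfl

lemma pairSwap_involutive (hm : m % 2 = 1) : Function.Involutive (pairSwap hm) := by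
  intro j
  ext
  simp only [val_pairSwap]
  split_ifs <;> omega

def altSign (j : Fin (m + 1)) : ℝ := if j.val % 2 = 0 then -1 else 1

lemma norm_altSign (j : Fin (m + 1)) : ‖altSign j‖ = 1 := by
  unfold altSign
  split_ifs <;> simp

lemma altSign_mul_altSign_pairSwap (hm : m % 2 = 1) (j : Fin (m + 1)) :
    altSign j * altSign (pairSwap hm j) = -1 := by
  simp only [altSign, val_pairSwap]
  split_ifs <;> first | omega | norm_num

def quarterTurn (hm : m % 2 = 1) :
    EuclideanSpace ℝ (Fin (m + 1)) →ₗᵢ[ℝ] EuclideanSpace ℝ (Fin (m + 1)) where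
  toFun x := WithLp.toLp 2 fun j => altSign j * x (pairSwap hm j)
  map_add' x y := by ext j; simp [mul_add]
  map_smul' c x := by ext j; simp [mul_left_comm]
  norm_map' x := by
    rw [EuclideanSpace.norm_eq, EuclideanSpace.norm_eq]
    congr 1
    refine Fintype.sum_equiv (pairSwap_involutive hm).toPerm _ _ fun j => ?_
    change ‖altSign j * x (pairSwap hm j)‖ ^ 2 = _
    rw [norm_mul, norm_altSign, one_mul]
    rfl

lemma quarterTurn_quarterTurn (hm : m % 2 = 1) (x : EuclideanSpace ℝ (Fin (m + 1))) :
    quarterTurn hm (quarterTurn hm x) = -x := by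
  ext j
  change altSign j * (altSign (pairSwap hm j) * x (pairSwap hm (pairSwap hm j))) = -x j
  rw [pairSwap_involutive, ← mul_assoc, altSign_mul_altSign_pairSwap, neg_one_mul]

end QuarterTurn

lemma antipodal_equivalence (m : ℕ) : Equivalence (antipodal m) where
  refl _ := .inl rfl
  symm := by
    rintro x y (h | h)
    · exact .inl h.symm
    · exact .inr (by rw [h, neg_neg])
  trans := by
    rintro x y z (h₁ | h₁) (h₂ | h₂)
    · exact .inl (h₂.trans h₁)
    · exact .inr (by rw [h₂, h₁])
    · exact .inr (by rw [h₂, h₁])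
    · exact .inl (by rw [h₂, h₁, neg_neg])

section InducedMap

variable {m : ℕ} (J : EuclideanSpace ℝ (Fin (m + 1)) →ₗᵢ[ℝ] EuclideanSpace ℝ (Fin (m + 1)))

def Sph.map (x : Sph m) : Sph m :=
  ⟨J x, by simp⟩

def RP.map : RP m → RP m :=
  Quot.map (Sph.map J) <| by
    rintro x y (h | h)
    · exact .inl (congrArg J h)
    · exact .inr ((congrArg J h).trans (J.map_neg _))

lemma RP.continuous_map : Continuous (RP.map J) :=
  continuous_quot_lift _ <| continuous_quot_mk.comp <|
    (J.continuous.comp continuous_subtype_val).subtype_mk _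

variable {J}

lemma RP.map_involutive (hJ : ∀ x, J (J x) = -x) : Function.Involutive (RP.map J) := by
  rintro ⟨x⟩
  exact Quot.sound (.inr (by simp [Sph.map, hJ]))

lemma RP.map_ne_self (hJ : ∀ x, J (J x) = -x) (p : RP m) : RP.map J p ≠ p := by
  induction p using Quot.ind with
  | mk x =>
    intro h
    have hx : (x : EuclideanSpace ℝ (Fin (m + 1))) ≠ 0 := ne_zero_of_mem_unit_sphere x
    obtain ⟨hJx, hJx'⟩ := J.toLinearMap.apply_ne_self_of_comp_self_eq_neg hJ hx
    rcases (antipodal_equivalence m).eqvGen_iff.mp (Quot.eqvGen_exact h) with h | h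
    · exact hJx h.symm
    · exact hJx' (neg_eq_iff_eq_neg.mp h.symm)

end InducedMap

theorem stmt9_general (m n : ℕ) (hm : m % 4 = 1) :
    ∃ ρ : (Fin n → ZMod 2) → (Fin n → RP m) → (Fin n → RP m),
      (∀ x, ρ 0 x = x) ∧
      (∀ g h x, ρ (g + h) x = ρ g (ρ h x)) ∧
      (∀ g, Continuous (ρ g)) ∧
      (∀ g x, ρ g x = x → g = 0) := by
  have hm₂ : m % 2 = 1 := by omega
  have hJ := quarterTurn_quarterTurn hm₂
  exact ⟨coordFlip (RP.map (quarterTurn hm₂)), coordFlip_zero,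
    coordFlip_add (RP.map_involutive hJ), continuous_coordFlip (RP.continuous_map _),
    fun _ _ => eq_zero_of_coordFlip_eq (RP.map_ne_self hJ)⟩

theorem stmt9 (m n : ℕ) (hm : m % 4 = 1) (hn : 1 ≤ n) :
    ∃ ρ : (Fin n → ZMod 2) → (Fin n → RP m) → (Fin n → RP m),
      (∀ x, ρ 0 x = x) ∧
      (∀ g h x, ρ (g + h) x = ρ g (ρ h x)) ∧
      (∀ g, Continuous (ρ g)) ∧
      (∀ g x, ρ g x = x → g = 0) :=
  stmt9_general m n hm
end
end

section
/- Let G be a finite 2-group and let V be a central elementary abelian subgroup of G of rank k. Then there exist an integer m ≥ 0 and a continuous action of G on the product (S^m)^k of k copies of the m-sphere such that the restriction of the action to V is free. -/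
noncomputable section

/-!
Let `χ₁, …, χ_k : V → {±1}` be the coordinate characters of a basis of `V` as an
`𝔽₂`-vector space, so that every `v ≠ 1` has `χᵢ v = -1` for some `i`. Each `χᵢ` induces an
orthogonal monomial representation `Ind_V^G χᵢ` on `ℝ^{G/V}`; since `V` is central, `v ∈ V` acts
on it as the scalar `χᵢ v`. Hence `G` acts on the product of the unit spheres of these `k`
representations, and a nontrivial `v ∈ V` acts antipodally on some factor, so it has no fixed
point.
-/

theorem exists_separating_signChars {A : Type*} [Group A] (hA : ∀ a : A, a * a = 1) {k : ℕ}
    (hk : Nat.card A = 2 ^ k) :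
    ∃ χ : Fin k → A →* ℤˣ, ∀ a, a ≠ 1 → ∃ i, χ i a = -1 := by
  let _ : CommGroup A :=
    { mul_comm a b := by
        rw [← mul_left_inj (b * a), ← mul_assoc, mul_assoc a b b, hA, mul_one, hA, hA] }
  let _ : Module (ZMod 2) (Additive A) :=
    AddCommGroup.zmodModule fun a => by rw [two_nsmul]; exact hA a.toMul
  have : Finite A := Nat.finite_of_card_ne_zero (by simp [hk])
  have : Fintype (Additive A) := Fintype.ofFinite _
  have hrank : Module.finrank (ZMod 2) (Additive A) = k := by
    refine Nat.pow_right_injective le_rfl ?_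
    have := Module.card_eq_pow_finrank (K := ZMod 2) (V := Additive A)
    simp only [← Nat.card_eq_fintype_card, Nat.card_zmod] at this
    exact this.symm.trans hk
  let b := Module.finBasisOfFinrankEq (ZMod 2) (Additive A) hrank
  refine ⟨fun i =>
    { toFun a := (-1) ^ b.coord i (.ofMul a)
      map_one' := by simp
      map_mul' a a' := by simp [uzpow_add] }, fun a ha => ?_⟩
  obtain ⟨i, hi⟩ : ∃ i, b.coord i (.ofMul a) ≠ 0 := by
    by_contra! h
    exact ha (b.forall_coord_eq_zero_iff.mp h)
  have h1 : b.coord i (.ofMul a) = 1 := by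
    revert hi; generalize b.coord i (.ofMul a) = z; decide +revert
  exact ⟨i, show (-1 : ℤˣ) ^ b.coord i (.ofMul a) = -1 by rw [h1, uzpow_one]⟩

theorem exists_linearIsometryEquiv_euclideanSpace_fin (ι : Type*) [Fintype ι] [Nonempty ι] :
    ∃ m : ℕ, Nonempty (EuclideanSpace ℝ ι ≃ₗᵢ[ℝ] EuclideanSpace ℝ (Fin (m + 1))) :=
  ⟨Fintype.card ι - 1, ⟨LinearIsometryEquiv.piLpCongrLeft 2 ℝ ℝ
    (Fintype.equivFinOfCardEq (Nat.succ_pred_eq_of_pos Fintype.card_pos).symm)⟩⟩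

namespace Subgroup

variable {G : Type*} [Group G] {H : Subgroup G}

variable (H) in
def transversalCocycle (g : G) (q : G ⧸ H) : H :=
  ⟨(g • q).out⁻¹ * g * q.out, by
    rw [mul_assoc, ← QuotientGroup.eq, QuotientGroup.out_eq', ← smul_eq_mul,
      MulAction.Quotient.coe_smul_out]⟩

@[simp]
theorem coe_transversalCocycle (g : G) (q : G ⧸ H) :
    (H.transversalCocycle g q : G) = (g • q).out⁻¹ * g * q.out := rfl

@[simp]
theorem transversalCocycle_one (q : G ⧸ H) : H.transversalCocycle 1 q = 1 := by
  ext; simp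

theorem transversalCocycle_mul (g g' : G) (q : G ⧸ H) :
    H.transversalCocycle (g * g') q =
      H.transversalCocycle g (g' • q) * H.transversalCocycle g' q := by
  ext; simp [mul_smul, mul_assoc]

theorem smul_eq_self_of_mem_center {h : G} (hH : h ∈ H) (hc : h ∈ center G) (q : G ⧸ H) :
    h • q = q := by
  induction q using QuotientGroup.induction_on with | H g => ?_
  rw [MulAction.Quotient.smul_coe, smul_eq_mul, (mem_center_iff.mp hc g).symm, QuotientGroup.eq]
  simpa using hH

theorem transversalCocycle_of_mem_center {h : G} (hH : h ∈ H) (hc : h ∈ center G) (q : G ⧸ H) :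
    H.transversalCocycle h q = ⟨h, hH⟩ := by
  ext
  rw [coe_transversalCocycle, smul_eq_self_of_mem_center hH hc q, mul_assoc,
    ← mem_center_iff.mp hc, inv_mul_cancel_left]

variable (H) in
/-- The induced representation `Ind_H^G χ`, written in the basis of `ℝ^{G ⧸ H}` indexed by the
cosets, with `Quotient.out` as transversal. -/
def inducedSignRep (χ : H →* ℤˣ) : Representation ℝ G (EuclideanSpace ℝ (G ⧸ H)) where
  toFun g :=
    { toFun f := WithLp.toLp 2 fun q => χ (H.transversalCocycle g (g⁻¹ • q)) • f (g⁻¹ • q)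
      map_add' f f' := by ext; simp [smul_add]
      map_smul' r f := by ext; simp [mul_smul_comm] }
  map_one' := by ext; simp
  map_mul' g g' := by ext; simp [transversalCocycle_mul, mul_smul]

@[simp]
theorem inducedSignRep_apply (χ : H →* ℤˣ) (g : G) (f : EuclideanSpace ℝ (G ⧸ H)) (q : G ⧸ H) :
    inducedSignRep H χ g f q = χ (H.transversalCocycle g (g⁻¹ • q)) • f (g⁻¹ • q) := rfl

theorem norm_inducedSignRep_apply [Fintype (G ⧸ H)] (χ : H →* ℤˣ) (g : G)
    (f : EuclideanSpace ℝ (G ⧸ H)) : ‖inducedSignRep H χ g f‖ = ‖f‖ := by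
  simp only [EuclideanSpace.norm_eq, inducedSignRep_apply, norm_units_zsmul]
  congr 1
  exact Equiv.sum_comp (MulAction.toPerm g⁻¹) fun q => ‖f q‖ ^ 2

theorem inducedSignRep_of_mem_center (χ : H →* ℤˣ) {h : G} (hH : h ∈ H) (hc : h ∈ center G)
    (f : EuclideanSpace ℝ (G ⧸ H)) : inducedSignRep H χ h f = χ ⟨h, hH⟩ • f := by
  ext q
  simp [transversalCocycle_of_mem_center hH hc,
    smul_eq_self_of_mem_center (inv_mem hH) (inv_mem hc)]

end Subgroup

theorem stmt13_general (G : Type) [Group G] [Finite G]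
    (V : Subgroup G) (hVcentral : V ≤ Subgroup.center G)
    (hV2 : ∀ v ∈ V, v * v = 1)
    (k : ℕ) (hVk : Nat.card V = 2 ^ k) :
    ∃ (m : ℕ) (ρ : G → (Fin k → Sph m) → (Fin k → Sph m)),
      (∀ x, ρ 1 x = x) ∧
      (∀ g h x, ρ (g * h) x = ρ g (ρ h x)) ∧
      (∀ g, Continuous (ρ g)) ∧
      -- the restriction of the action to V is free
      (∀ v ∈ V, ∀ x, ρ v x = x → v = 1) := by
  classical
  have := Fintype.ofFinite G
  obtain ⟨χ, hχ⟩ := exists_separating_signChars (A := V) (fun v => Subtype.ext (hV2 v v.2)) hVk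
  obtain ⟨m, ⟨L⟩⟩ := exists_linearIsometryEquiv_euclideanSpace_fin (G ⧸ V)
  let R (i : Fin k) (g : G) : Module.End ℝ (EuclideanSpace ℝ (Fin (m + 1))) :=
    L.toLinearEquiv.conjAlgEquiv ℝ (V.inducedSignRep (χ i) g)
  have norm_R (i g x) : ‖R i g x‖ = ‖x‖ := by simp [R, Subgroup.norm_inducedSignRep_apply]
  refine ⟨m, fun g x i => ⟨R i g (x i), by simp [norm_R]⟩, fun x => ?_, fun g h x => ?_,
    fun g => ?_, fun v hv x hx => ?_⟩
  · ext i : 1; simp [R]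
  · ext i : 1; simp [R]
  · exact continuous_pi fun i => ((R i g).continuous_of_finiteDimensional.comp
      (continuous_subtype_val.comp (continuous_apply i))).subtype_mk _
  · by_contra hv1
    obtain ⟨i, hi⟩ := hχ ⟨v, hv⟩ (by simpa using hv1)
    have hR : R i v = -1 := by
      ext y : 1
      simp [R, Subgroup.inducedSignRep_of_mem_center (χ i) hv (hVcentral hv), hi]
    have hxi := congrArg Subtype.val (congrFun hx i)
    simp only [hR] at hxi
    exact ne_neg_of_mem_unit_sphere ℝ (x i) (Subtype.ext (by simpa using hxi.symm))

theorem stmt13 (G : Type) [Group G] [Finite G] (h2 : IsPGroup 2 G)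
    (V : Subgroup G) (hVcentral : V ≤ Subgroup.center G)
    (hV2 : ∀ v ∈ V, v * v = 1)
    (k : ℕ) (hVk : Nat.card V = 2 ^ k) :
    ∃ (m : ℕ) (ρ : G → (Fin k → Sph m) → (Fin k → Sph m)),
      (∀ x, ρ 1 x = x) ∧
      (∀ g h x, ρ (g * h) x = ρ g (ρ h x)) ∧
      (∀ g, Continuous (ρ g)) ∧
      -- the restriction of the action to V is free
      (∀ v ∈ V, ∀ x, ρ v x = x → v = 1) :=
  stmt13_general G V hVcentral hV2 k hVk
end
end

section
/- Let G be a finite 2-group in which every element of order 2 is central (the 2C condition). Then E = {g ∈ G : g² = 1} is a central elementary abelian subgroup of G, say of rank n, and there exist an integer m ≥ 0 and a free continuous action of G on X = (S^m)^n such that the orbit space X/E (with the quotient topology) is homeomorphic to (ℝP^m)^n. -/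
/-!
`E` is an elementary abelian 2-group, so `E ≃* (Fin n → ℤˣ)` and the coordinates give `n` sign
characters `χ j : E → {±1}`. The induced representation `Ind_E^G (χ j)` (functions `f` on `G`
with `f (z * x) = χ j z * f x`, acted on by right translation) is orthogonal of dimension
`[G : E] = m + 1`, and since `E` is central each `z ∈ E` acts on it by the scalar `χ j z`.
Let `G` act on the product of the unit spheres of these `n` representations. A nontrivial
`z ∈ E` has some `χ j z = -1`, so it negates a factor and fixes no point; as every nontrivial
element of a 2-group has a power of order 2, which lies in `E`, the action is free. The
`E`-orbits are exactly the products of antipodal pairs, so `X/E ≃ₜ (ℝP^m)ⁿ`.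
-/

noncomputable section

open Topology

section ExponentTwo

variable {A : Type*} [Group A]

theorem mul_comm_of_forall_mul_self_eq_one (hA : ∀ a : A, a * a = 1) (a b : A) :
    a * b = b * a := by
  have hinv : ∀ c : A, c⁻¹ = c := fun c => inv_eq_of_mul_eq_one_right (hA c)
  rw [← hinv (a * b), mul_inv_rev, hinv, hinv]

theorem exists_mulEquiv_pi_unitsInt [Finite A] (hA : ∀ a : A, a * a = 1) :
    ∃ n : ℕ, Nonempty (A ≃* (Fin n → ℤˣ)) := by
  let _ : CommGroup A := { mul_comm := mul_comm_of_forall_mul_self_eq_one hA }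
  let _ : Module (ZMod 2) (Additive A) :=
    AddCommGroup.zmodModule fun a => by rw [two_nsmul]; exact hA a.toMul
  let n := Module.finrank (ZMod 2) (Additive A)
  have hrank : n = Module.finrank (ZMod 2) (Fin n → Additive ℤˣ) := by
    simpa [Nat.card_pi] using
      Module.natCard_eq_pow_finrank (K := ZMod 2) (V := Fin n → Additive ℤˣ)
  exact ⟨n, ⟨(AddEquiv.toMultiplicativeRight (LinearEquiv.ofFinrankEq _ _ hrank).toAddEquiv).trans
    (MulEquiv.piMultiplicative _)⟩⟩

end ExponentTwo

section CentralInvolutions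

variable {G : Type*} [Group G]

theorem mem_center_of_mul_self_eq_one (h2C : ∀ g : G, orderOf g = 2 → g ∈ Subgroup.center G)
    {g : G} (hg : g * g = 1) : g ∈ Subgroup.center G := by
  rcases eq_or_ne g 1 with rfl | hne
  · exact Subgroup.one_mem _
  · exact h2C g (orderOf_eq_prime (by rwa [pow_two]) hne)

def mulSelfEqOneSubgroup (hcenter : ∀ g : G, g * g = 1 → g ∈ Subgroup.center G) : Subgroup G where
  carrier := {g | g * g = 1}
  one_mem' := mul_one 1
  inv_mem' {a} (ha : a * a = 1) := show a⁻¹ * a⁻¹ = 1 by rw [← mul_inv_rev, ha, inv_one]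
  mul_mem' {a b} (ha : a * a = 1) (hb : b * b = 1) := by
    have hba : Commute b a := Subgroup.mem_center_iff.mp (hcenter a ha) b
    show a * b * (a * b) = 1
    rw [hba.mul_mul_mul_comm, ha, hb, one_mul]

end CentralInvolutions

theorem IsPGroup.eq_one_of_smul_eq_self {p : ℕ} [Fact p.Prime] {G X : Type*} [Group G]
    [MulAction G X] (hG : IsPGroup p G) (h : ∀ g : G, orderOf g = p → ∀ x : X, g • x ≠ x)
    {g : G} {x : X} (hgx : g • x = x) : g = 1 := by
  by_contra hg
  obtain ⟨k, hk⟩ := IsPGroup.iff_orderOf.mp hG g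
  have hk0 : k ≠ 0 := by rintro rfl; exact hg (orderOf_eq_one_iff.mp hk)
  have hdvd : p ∣ orderOf g := hk ▸ dvd_pow_self p hk0
  refine h _ (orderOf_pow_orderOf_div (hk ▸ (pow_pos (Fact.out : p.Prime).pos k).ne') hdvd) x ?_
  exact (MulAction.stabilizer G x).pow_mem hgx _

section IsometryGroup

variable {R V V' : Type*} [Semiring R] [SeminormedAddCommGroup V] [Module R V]
  [SeminormedAddCommGroup V'] [Module R V']

def LinearIsometryEquiv.conjMulEquiv (e : V ≃ₗᵢ[R] V') : (V ≃ₗᵢ[R] V) ≃* (V' ≃ₗᵢ[R] V') where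
  toFun f := (e.symm.trans f).trans e
  invFun f := (e.trans f).trans e.symm
  left_inv f := by ext; simp
  right_inv f := by ext; simp
  map_mul' f g := by ext; simp

end IsometryGroup

def MonoidHom.restrictLinearIsometryEquiv {G R V : Type*} [Group G] [Ring R]
    [SeminormedAddCommGroup V] [Module R V] (π : G →* (V ≃ₗᵢ[R] V)) (W : Submodule R V)
    (hW : ∀ g, ∀ v ∈ W, π g v ∈ W) : G →* (W ≃ₗᵢ[R] W) where
  toFun g :=
    { toFun v := ⟨π g v, hW g v v.2⟩
      invFun v := ⟨π g⁻¹ v, hW g⁻¹ v v.2⟩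
      left_inv v := by ext; simp
      right_inv v := by ext; simp
      map_add' v w := by ext; simp
      map_smul' c v := by ext; simp
      norm_map' v := (π g).norm_map v }
  map_one' := by ext; simp
  map_mul' g h := by ext; simp

section CosetCoord

variable {G : Type*} [Group G] (E : Subgroup G)

def cosetCoord (x : G) : E :=
  ⟨(x : G ⧸ E).out⁻¹ * x, QuotientGroup.eq.mp (QuotientGroup.out_eq' _)⟩

variable {E}

theorem cosetCoord_out (q : G ⧸ E) : cosetCoord E q.out = 1 := by
  ext
  simp [cosetCoord]

variable (hE : E ≤ Subgroup.center G)
include hE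

theorem QuotientGroup.mk_mul_of_le_center (z : E) (x : G) : ((z * x : G) : G ⧸ E) = x := by
  rw [← Subgroup.mem_center_iff.mp (hE z.2) x]
  exact QuotientGroup.mk_mul_of_mem x z.2

theorem cosetCoord_mul (z : E) (x : G) : cosetCoord E (z * x) = z * cosetCoord E x := by
  ext
  simp only [cosetCoord, QuotientGroup.mk_mul_of_le_center hE, Subgroup.coe_mul]
  rw [← mul_assoc, ← mul_assoc, Subgroup.mem_center_iff.mp (hE z.2)]

theorem cosetCoord_mul_out (x : G) : (cosetCoord E x : G) * (x : G ⧸ E).out = x := by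
  rw [← Subgroup.mem_center_iff.mp (hE (cosetCoord E x).2), cosetCoord, mul_inv_cancel_left]

end CosetCoord

section InducedRepresentation

variable {G : Type*} [Group G] [Fintype G]

def rightRegular : G →* (EuclideanSpace ℝ G ≃ₗᵢ[ℝ] EuclideanSpace ℝ G) where
  toFun g := LinearIsometryEquiv.piLpCongrLeft 2 ℝ ℝ (Equiv.mulRight g).symm
  map_one' := by ext; simp
  map_mul' g h := by ext; simp [mul_assoc]

theorem rightRegular_apply (g : G) (f : EuclideanSpace ℝ G) (x : G) :
    rightRegular g f x = f (x * g) := rfl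

variable (E : Subgroup G) (χ : E →* ℝ)

def indSpace : Submodule ℝ (EuclideanSpace ℝ G) where
  carrier := {f | ∀ (z : E) (x : G), f (z * x) = χ z * f x}
  zero_mem' := by simp
  add_mem' hf hg z x := by simp [hf z x, hg z x, mul_add]
  smul_mem' c f hf z x := by simp [hf z x, mul_left_comm]

def indRep : G →* (indSpace E χ ≃ₗᵢ[ℝ] indSpace E χ) :=
  rightRegular.restrictLinearIsometryEquiv (indSpace E χ) fun g f hf z x => by
    simp only [rightRegular_apply, mul_assoc, hf z]

variable {E}

theorem indRep_apply_of_le_center (hE : E ≤ Subgroup.center G) (z : E) (f : indSpace E χ) :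
    indRep E χ z f = χ z • f := by
  ext x
  change f.1 (x * z) = χ z * f.1 x
  rw [Subgroup.mem_center_iff.mp (hE z.2) x, f.2 z x]

def indSpaceEquiv (hE : E ≤ Subgroup.center G) : indSpace E χ ≃ₗ[ℝ] (G ⧸ E → ℝ) where
  toFun f q := f.1 q.out
  invFun F := ⟨WithLp.toLp 2 fun x => χ (cosetCoord E x) * F x, fun z x => by
    simp [cosetCoord_mul hE, QuotientGroup.mk_mul_of_le_center hE, mul_assoc]⟩
  left_inv f := by
    ext x
    conv_rhs => rw [← cosetCoord_mul_out hE x, f.2]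
  right_inv F := by ext q; simp [cosetCoord_out]
  map_add' f g := by ext; simp
  map_smul' c f := by ext; simp

theorem finrank_indSpace (hE : E ≤ Subgroup.center G) :
    Module.finrank ℝ (indSpace E χ) = Nat.card (G ⧸ E) := by
  let _ := Fintype.ofFinite (G ⧸ E)
  rw [(indSpaceEquiv χ hE).finrank_eq, Module.finrank_fintype_fun_eq_card, Nat.card_eq_fintype_card]

theorem exists_monoidHom_linearIsometryEquiv_euclideanSpace (hE : E ≤ Subgroup.center G) {d : ℕ}
    (hd : Nat.card (G ⧸ E) = d) :
    ∃ π : G →* (EuclideanSpace ℝ (Fin d) ≃ₗᵢ[ℝ] EuclideanSpace ℝ (Fin d)),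
      ∀ (z : E) v, π z v = χ z • v := by
  let e := ((stdOrthonormalBasis ℝ (indSpace E χ)).reindex
    (finCongr ((finrank_indSpace χ hE).trans hd))).repr
  refine ⟨e.conjMulEquiv.toMonoidHom.comp (indRep E χ), fun z v => ?_⟩
  simp [LinearIsometryEquiv.conjMulEquiv, indRep_apply_of_le_center χ hE]

end InducedRepresentation

section SphereAction

variable {G ι R V : Type*} [Group G] [Semiring R] [SeminormedAddCommGroup V] [Module R V]

abbrev sphereProdAction (π : ι → G →* (V ≃ₗᵢ[R] V)) (r : ℝ) :
    MulAction G (ι → Metric.sphere (0 : V) r) where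
  smul g x j := ⟨π j g (x j), by simp⟩
  one_smul x := funext fun j => Subtype.ext <| by
    change π j 1 (x j) = (x j : V)
    simp
  mul_smul g h x := funext fun j => Subtype.ext <| by
    change π j (g * h) (x j) = π j g (π j h (x j))
    simp

theorem continuous_sphereProdAction_smul (π : ι → G →* (V ≃ₗᵢ[R] V)) (r : ℝ) (g : G) :
    letI := sphereProdAction π r
    Continuous fun x : ι → Metric.sphere (0 : V) r => g • x :=
  continuous_pi fun j =>
    ((π j g).continuous.comp (continuous_subtype_val.comp (continuous_apply j))).subtype_mk _

end SphereAction

section ProjectiveSpace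

variable {m : ℕ}

theorem antipodal_iff_exists_units {x y : Sph m} :
    antipodal m x y ↔ ∃ u : ℤˣ, (y : EuclideanSpace ℝ (Fin (m + 1))) = ((u : ℤ) : ℝ) • x := by
  constructor
  · rintro (h | h)
    · exact ⟨1, by simp [h]⟩
    · exact ⟨-1, by simp [h]⟩
  · rintro ⟨u, hu⟩
    rcases Int.units_eq_one_or u with rfl | rfl
    · exact Or.inl (by simpa using hu)
    · exact Or.inr (by simpa using hu)

theorem antipodal_iff_eq_or_eq_neg {x y : Sph m} : antipodal m x y ↔ y = x ∨ y = -x := by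
  simp [antipodal, Subtype.ext_iff]

theorem equivalence_antipodal : Equivalence (antipodal m) where
  refl x := Or.inl rfl
  symm {x y} := by simp only [antipodal_iff_eq_or_eq_neg]; rintro (rfl | rfl) <;> simp
  trans {x y z} := by
    simp only [antipodal_iff_eq_or_eq_neg]
    rintro (rfl | rfl) (rfl | rfl) <;> simp

theorem isOpenQuotientMap_quot_mk_antipodal : IsOpenQuotientMap (Quot.mk (antipodal m)) := by
  refine ⟨Quot.mk_surjective, continuous_quot_mk, fun U hU => ?_⟩
  rw [← isQuotientMap_quot_mk.isOpen_preimage]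
  have hsat : Quot.mk (antipodal m) ⁻¹' (Quot.mk (antipodal m) '' U) = U ∪ Neg.neg ⁻¹' U := by
    ext x
    simp only [Set.mem_preimage, Set.mem_image, Set.mem_union, equivalence_antipodal.quot_mk_eq_iff,
      antipodal_iff_eq_or_eq_neg]
    constructor
    · rintro ⟨a, ha, rfl | rfl⟩
      · exact Or.inl ha
      · exact Or.inr (by simpa using ha)
    · rintro (hx | hx)
      · exact ⟨x, hx, Or.inl rfl⟩
      · exact ⟨-x, hx, Or.inr (neg_neg x).symm⟩
  rw [hsat]
  exact hU.union (hU.preimage continuous_neg)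

end ProjectiveSpace

section SignAction

variable {m n : ℕ} {G : Type*} [Group G] [MulAction G (Fin n → Sph m)] {E : Subgroup G}
  (ψ : E ≃* (Fin n → ℤˣ))
  (hψ : ∀ (z : E) (x : Fin n → Sph m) (j : Fin n),
    (((z : G) • x) j : EuclideanSpace ℝ (Fin (m + 1))) =
      ((ψ z j : ℤ) : ℝ) • (x j : EuclideanSpace ℝ (Fin (m + 1))))
include hψ

theorem smul_ne_self_of_ne_one {z : E} (hz : z ≠ 1) (x : Fin n → Sph m) : (z : G) • x ≠ x := by
  obtain ⟨j, hj⟩ : ∃ j, ψ z j ≠ 1 := by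
    by_contra! h
    exact hz (ψ.injective (by rw [map_one]; exact funext h))
  intro hzx
  have hneg := hψ z x j
  rw [hzx, (Int.units_eq_one_or _).resolve_left hj] at hneg
  simp only [Units.val_neg, Units.val_one, Int.reduceNeg, Int.cast_neg, Int.cast_one, neg_smul,
    one_smul] at hneg
  exact ne_neg_of_mem_unit_sphere ℝ (x j) (Subtype.ext hneg)

theorem exists_smul_eq_iff_forall_antipodal (x y : Fin n → Sph m) :
    (∃ e ∈ E, e • x = y) ↔ ∀ j, antipodal m (x j) (y j) := by
  constructor
  · rintro ⟨e, he, rfl⟩ j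
    exact antipodal_iff_exists_units.mpr ⟨ψ ⟨e, he⟩ j, hψ ⟨e, he⟩ x j⟩
  · intro h
    choose u hu using fun j => antipodal_iff_exists_units.mp (h j)
    refine ⟨ψ.symm u, (ψ.symm u).2, funext fun j => Subtype.ext ?_⟩
    rw [hψ, ψ.apply_symm_apply, hu]

theorem nonempty_quot_homeomorph_pi_rp :
    Nonempty (Quot (fun x y : Fin n → Sph m => ∃ e ∈ E, e • x = y) ≃ₜ (Fin n → RP m)) := by
  let f := Pi.map fun _ : Fin n => Quot.mk (antipodal m)
  have hf : IsQuotientMap f :=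
    (IsOpenQuotientMap.piMap fun _ => isOpenQuotientMap_quot_mk_antipodal).isQuotientMap
  have hR : (fun x y : Fin n → Sph m => ∃ e ∈ E, e • x = y) = @Setoid.r _ (Setoid.ker f) := by
    ext x y
    rw [exists_smul_eq_iff_forall_antipodal ψ hψ]
    simp [f, funext_iff, equivalence_antipodal.quot_mk_eq_iff]
  rw [hR]
  exact ⟨IsQuotientMap.homeomorph (f := ⟨f, hf.continuous⟩) hf⟩

end SignAction

theorem stmt14 (G : Type) [Group G] [Finite G] (h2 : IsPGroup 2 G)
    -- the 2C condition: every element of order 2 is central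
    (h2C : ∀ g : G, orderOf g = 2 → g ∈ Subgroup.center G) :
    ∃ E : Subgroup G,
      (E : Set G) = {g : G | g * g = 1} ∧
      E ≤ Subgroup.center G ∧
      ∃ n : ℕ, Nat.card E = 2 ^ n ∧
        ∃ (m : ℕ) (ρ : G → (Fin n → Sph m) → (Fin n → Sph m)),
          (∀ x, ρ 1 x = x) ∧
          (∀ g h x, ρ (g * h) x = ρ g (ρ h x)) ∧
          (∀ g, Continuous (ρ g)) ∧
          (∀ g x, ρ g x = x → g = 1) ∧
          Nonempty
            ((Quot fun x y : Fin n → Sph m => ∃ e ∈ E, ρ e x = y) ≃ₜ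
              (Fin n → RP m)) := by
  let _ := Fintype.ofFinite G
  have hcenter (g : G) : g * g = 1 → g ∈ Subgroup.center G := mem_center_of_mul_self_eq_one h2C
  let E := mulSelfEqOneSubgroup hcenter
  have hE : E ≤ Subgroup.center G := hcenter
  obtain ⟨n, ⟨ψ⟩⟩ := exists_mulEquiv_pi_unitsInt (A := E) fun z => Subtype.ext z.2
  obtain ⟨m, hm⟩ := Nat.exists_eq_add_one.mpr (Nat.card_pos (α := G ⧸ E))
  let χ (j : Fin n) : E →* ℝ := (Int.castRingHom ℝ : ℤ →* ℝ).comp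
    ((Units.coeHom ℤ).comp ((Pi.evalMonoidHom (fun _ => ℤˣ) j).comp ψ.toMonoidHom))
  choose π hπ using fun j => exists_monoidHom_linearIsometryEquiv_euclideanSpace (χ j) hE hm
  let _ := sphereProdAction π 1
  have hψ (z : E) (x : Fin n → Sph m) (j : Fin n) := hπ j z (x j)
  refine ⟨E, rfl, hE, n, ?_, m, fun g x => g • x, one_smul G, mul_smul,
    continuous_sphereProdAction_smul π 1, fun g x => IsPGroup.eq_one_of_smul_eq_self h2 ?_,
    nonempty_quot_homeomorph_pi_rp ψ hψ⟩
  · simp [Nat.card_congr ψ.toEquiv]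
  · intro g hg x
    have hgE : g * g = 1 := by rw [← pow_two, ← hg, pow_orderOf_eq_one]
    have hg1 : g ≠ 1 := by rintro rfl; simp at hg
    exact smul_ne_self_of_ne_one ψ hψ (z := ⟨g, hgE⟩) (fun h => hg1 (congrArg Subtype.val h)) x
end
end

section
/- Let n ≥ 1 and work in the polynomial ring 𝔽₂[x₁,…,x_n]. Let y₁,…,y_n be homogeneous linear forms that constitute an 𝔽₂-basis of the space of homogeneous linear forms, and let N ≥ 2 be an integer that is not a power of 2. If z is a nonzero homogeneous linear form such that z^N lies in the 𝔽₂-linear span of {y₁^N, …, y_n^N}, then z = y_i for some i. -/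
/-!
Write `N = 2 ^ r * k` with `k` odd, so `k ≥ 3`. Over `𝔽₂` the Frobenius is `𝔽₂`-linear and
injective on the (reduced) polynomial ring, so already `z ^ k` lies in the span of the `y i ^ k`.
If `z = ∑ dᵢ yᵢ` had two nonzero coordinates `d_p`, `d_q`, send every linear form `w` to
`w_p + w_q ε` in the dual numbers `𝔽₂[ε]` and extend to an algebra map. Each `y i` goes to `1`, `ε`
or `0`, so every `y i ^ k` has vanishing `ε`-part, whereas `z ^ k` goes to `(d_p + d_q ε) ^ k`,
whose `ε`-part `k d_p ^ (k - 1) d_q` is nonzero.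
-/

open MvPolynomial TrivSqZeroExt

section FrobeniusDescent

variable {K A ι : Type*} [Field K] [Fintype K] [CommRing A] [IsReduced A] [Algebra K A]

theorem mem_span_of_pow_card_mem_span_pow_card {x : A} {v : ι → A}
    (h : x ^ Fintype.card K ∈ Submodule.span K (Set.range fun i => v i ^ Fintype.card K)) :
    x ∈ Submodule.span K (Set.range v) := by
  set F := FiniteField.frobeniusAlgHom K A
  have hF : Function.Injective F := by
    refine (injective_iff_map_eq_zero F).2 fun a ha => ?_
    exact IsReduced.eq_zero a ⟨_, ha⟩
  have hspan : Submodule.span K (Set.range fun i => v i ^ Fintype.card K) =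
      (Submodule.span K (Set.range v)).map F.toLinearMap := by
    rw [Submodule.map_span, ← Set.range_comp]
    rfl
  obtain ⟨y, hy, hyx⟩ := Submodule.mem_map.1 (hspan ▸ h)
  exact hF hyx ▸ hy

theorem mem_span_of_pow_card_pow_mem_span_pow_card_pow {x : A} {v : ι → A} (r : ℕ)
    (h : x ^ Fintype.card K ^ r ∈
      Submodule.span K (Set.range fun i => v i ^ Fintype.card K ^ r)) :
    x ∈ Submodule.span K (Set.range v) := by
  induction r generalizing x v with
  | zero => simpa using h
  | succ r ih =>
    refine ih (mem_span_of_pow_card_mem_span_pow_card ?_)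
    simpa only [← pow_mul, ← pow_succ] using h

end FrobeniusDescent

namespace MvPolynomial

variable {σ R A : Type*} [CommSemiring R] [CommSemiring A] [Algebra R A]

theorem span_range_X_homogeneousSubmodule_one :
    Submodule.span R (Set.range fun j : σ =>
      (⟨X j, isHomogeneous_X R j⟩ : homogeneousSubmodule σ R 1)) = ⊤ := by
  refine Submodule.map_injective_of_injective (homogeneousSubmodule σ R 1).injective_subtype ?_
  rw [Submodule.map_span, ← Set.range_comp, Submodule.map_top, Submodule.range_subtype]
  exact homogeneousSubmodule_one_eq_span_X.symm

theorem aeval_homogeneousSubmodule_one (f : homogeneousSubmodule σ R 1 →ₗ[R] A)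
    (w : homogeneousSubmodule σ R 1) :
    aeval (fun j => f ⟨X j, isHomogeneous_X R j⟩) (w : MvPolynomial σ R) = f w := by
  have : (aeval (fun j => f ⟨X j, isHomogeneous_X R j⟩)).toLinearMap ∘ₗ
      (homogeneousSubmodule σ R 1).subtype = f :=
    LinearMap.ext_on_range span_range_X_homogeneousSubmodule_one fun j => by simp
  exact LinearMap.congr_fun this w

end MvPolynomial

namespace DualNumber

variable {K : Type*} [CommSemiring K]

theorem snd_pow_eq_zero (x : DualNumber K) {k : ℕ} (hk : 2 ≤ k)
    (hx : x.fst * x.snd = 0) : (x ^ k).snd = 0 := by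
  obtain ⟨m, rfl⟩ := Nat.exists_eq_add_of_le' hk
  rw [snd_pow, Nat.pred_eq_sub_one, show m + 2 - 1 = m + 1 by omega, pow_succ, smul_eq_mul,
    mul_assoc, hx, mul_zero, smul_zero]

theorem snd_pow_ne_zero [NoZeroDivisors K] (x : DualNumber K) {k : ℕ}
    (hk : (k : K) ≠ 0) (hfst : x.fst ≠ 0) (hsnd : x.snd ≠ 0) : (x ^ k).snd ≠ 0 := by
  rw [snd_pow, smul_eq_mul, nsmul_eq_mul]
  exact mul_ne_zero hk (mul_ne_zero (pow_ne_zero _ hfst) hsnd)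

end DualNumber

theorem eq_of_repr_ne_zero_of_pow_mem_span_pow {K ι σ : Type*} [CommRing K] [NoZeroDivisors K]
    (b : Module.Basis ι K (homogeneousSubmodule σ K 1)) {k : ℕ} (hk : 2 ≤ k) (hkK : (k : K) ≠ 0)
    {z : homogeneousSubmodule σ K 1}
    (hz : (z : MvPolynomial σ K) ^ k ∈
      Submodule.span K (Set.range fun i => (b i : MvPolynomial σ K) ^ k))
    {p q : ι} (hp : b.repr z p ≠ 0) (hq : b.repr z q ≠ 0) : p = q := by
  by_contra hpq
  let f : homogeneousSubmodule σ K 1 →ₗ[K] DualNumber K :=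
    (inlAlgHom K K K).toLinearMap ∘ₗ b.coord p + inrHom K K ∘ₗ b.coord q
  have hf : ∀ w, (f w).fst = b.repr w p ∧ (f w).snd = b.repr w q := fun w => by simp [f]
  set φ : MvPolynomial σ K →ₐ[K] DualNumber K := aeval fun j => f ⟨X j, isHomogeneous_X K j⟩
  have hφ (w : homogeneousSubmodule σ K 1) : φ ((w : MvPolynomial σ K) ^ k) = f w ^ k := by
    rw [map_pow, aeval_homogeneousSubmodule_one]
  have hspan : Submodule.span K (Set.range fun i => (b i : MvPolynomial σ K) ^ k) ≤
      LinearMap.ker (sndHom K K ∘ₗ φ.toLinearMap) := by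
    rw [Submodule.span_le]
    rintro _ ⟨i, rfl⟩
    change (φ ((b i : MvPolynomial σ K) ^ k)).snd = 0
    rw [hφ]
    refine DualNumber.snd_pow_eq_zero (f (b i)) hk ?_
    rw [(hf _).1, (hf _).2, b.repr_self]
    rcases eq_or_ne i p with rfl | hip
    · rw [Finsupp.single_eq_of_ne (Ne.symm hpq), mul_zero]
    · rw [Finsupp.single_eq_of_ne hip.symm, zero_mul]
  have hzk : (φ ((z : MvPolynomial σ K) ^ k)).snd = 0 := hspan hz
  rw [hφ] at hzk
  exact DualNumber.snd_pow_ne_zero (f z) hkK ((hf z).1 ▸ hp) ((hf z).2 ▸ hq) hzk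

theorem Module.Basis.exists_eq_of_repr_ne_zero_imp_eq {ι M : Type*} [AddCommGroup M]
    [Module (ZMod 2) M] (b : Module.Basis ι (ZMod 2) M) {w : M} (hw : w ≠ 0)
    (h : ∀ p q, b.repr w p ≠ 0 → b.repr w q ≠ 0 → p = q) : ∃ i, w = b i := by
  obtain ⟨p, hp⟩ := Finsupp.ne_iff.1 (b.repr.map_ne_zero_iff.2 hw)
  refine ⟨p, b.repr.injective ?_⟩
  rw [b.repr_self]
  refine Finsupp.eq_single_iff.2 ⟨fun q hq => ?_, (by decide : ∀ c : ZMod 2, c ≠ 0 → c = 1) _ hp⟩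
  exact Finset.mem_singleton.2 (h p q hp (Finsupp.mem_support_iff.1 hq)).symm

theorem stmt15_general (n : ℕ)
    (N : ℕ) (hN : 2 ≤ N) (hNpow : ∀ r : ℕ, N ≠ 2 ^ r)
    (y : Fin n → MvPolynomial (Fin n) (ZMod 2))
    (hyind : LinearIndependent (ZMod 2) y)
    (hyspan : Submodule.span (ZMod 2) (Set.range y) =
      MvPolynomial.homogeneousSubmodule (Fin n) (ZMod 2) 1)
    (z : MvPolynomial (Fin n) (ZMod 2))
    (hzhom : z.IsHomogeneous 1) (hz0 : z ≠ 0)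
    (hzN : z ^ N ∈ Submodule.span (ZMod 2) (Set.range fun i => y i ^ N)) :
    ∃ i, z = y i := by
  obtain ⟨r, k, hk, rfl⟩ := Nat.exists_eq_two_pow_mul_odd (by omega : N ≠ 0)
  have hk1 : k ≠ 1 := fun h => hNpow r (by rw [h, mul_one])
  have hk2 : 2 ≤ k := by
    obtain ⟨m, rfl⟩ := hk
    omega
  have hzk : z ^ k ∈ Submodule.span (ZMod 2) (Set.range fun i => y i ^ k) := by
    refine mem_span_of_pow_card_pow_mem_span_pow_card_pow (K := ZMod 2) r ?_
    simpa only [ZMod.card, ← pow_mul, mul_comm k] using hzN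
  let b := (Module.Basis.span hyind).map (LinearEquiv.ofEq _ _ hyspan)
  have hb (i : Fin n) : (b i : MvPolynomial (Fin n) (ZMod 2)) = y i := by simp [b]
  obtain ⟨p, hp⟩ := b.exists_eq_of_repr_ne_zero_imp_eq (w := ⟨z, hzhom⟩)
    (fun h => hz0 (congrArg Subtype.val h)) fun p q =>
      eq_of_repr_ne_zero_of_pow_mem_span_pow b hk2 (ZMod.natCast_ne_zero_iff_odd.2 hk)
        (by simpa only [hb] using hzk)
  exact ⟨p, hb p ▸ congrArg Subtype.val hp⟩

theorem stmt15 (n : ℕ) (hn : 1 ≤ n)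
    (N : ℕ) (hN : 2 ≤ N) (hNpow : ∀ r : ℕ, N ≠ 2 ^ r)
    (y : Fin n → MvPolynomial (Fin n) (ZMod 2))
    (hyhom : ∀ i, (y i).IsHomogeneous 1)
    (hyind : LinearIndependent (ZMod 2) y)
    (hyspan : Submodule.span (ZMod 2) (Set.range y) =
      MvPolynomial.homogeneousSubmodule (Fin n) (ZMod 2) 1)
    (z : MvPolynomial (Fin n) (ZMod 2))
    (hzhom : z.IsHomogeneous 1) (hz0 : z ≠ 0)
    (hzN : z ^ N ∈ Submodule.span (ZMod 2) (Set.range fun i => y i ^ N)) :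
    ∃ i, z = y i :=
  stmt15_general n N hN hNpow y hyind hyspan z hzhom hz0 hzN
end
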